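/- Let X and Y be random variables with values in a measurable space S, and suppose there is a measurable map q : S → U such that E[f(X) | σ(Y)] = E[f̂(q(X)) | σ(Y)] a.s. and E[g(Y) | σ(X)] = E[ĝ(q(Y)) | σ(X)] a.s. for all bounded measurable f, g : S → ℝ (with f̂, ĝ : U → ℝ bounded measurable depending on f, g respectively, and satisfying E[f(X)] = E[f̂(q(X))], E[g(Y)] = E[ĝ(q(Y))]). Then for all such f, g: E[f(X) g(Y)] = E[f̂(q(X)) ĝ(q(Y))]. -/
import Mathlib

open MeasureTheory Filter

lemma aux_integrable {Ω : Type*} [MeasurableSpace Ω] {P : Measure Ω} [IsProbabilityMeasure P]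
    {h : Ω → ℝ} (hm : Measurable h) {C : ℝ} (hb : ∀ ω, |h ω| ≤ C) : Integrable h P :=
  ⟨hm.aestronglyMeasurable, HasFiniteIntegral.of_bounded (C := C) (Eventually.of_forall hb)⟩

lemma aux_key {Ω : Type*} [mΩ : MeasurableSpace Ω] {P : Measure Ω} [IsProbabilityMeasure P]
    {m : MeasurableSpace Ω} (hm : m ≤ mΩ) {h φ : Ω → ℝ}
    (hh : StronglyMeasurable[m] h) (hφi : Integrable φ P)
    (hhφi : Integrable (fun ω => h ω * φ ω) P) :
    ∫ ω, h ω * φ ω ∂P = ∫ ω, h ω * (P[φ|m]) ω ∂P := by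
  haveI : IsFiniteMeasure (P.trim hm) := isFiniteMeasure_trim hm
  have h1 := condExp_mul_of_stronglyMeasurable_left hh hhφi hφi
  calc ∫ ω, h ω * φ ω ∂P = ∫ ω, (P[fun ω => h ω * φ ω|m]) ω ∂P :=
        (integral_condExp hm).symm
    _ = ∫ ω, h ω * (P[φ|m]) ω ∂P := integral_congr_ae (h1.mono fun ω hω => hω)

theorem stmt_4 {Ω S U : Type*} [MeasurableSpace Ω] [MeasurableSpace S] [MeasurableSpace U]
    {P : Measure Ω} [IsProbabilityMeasure P]
    {X Y : Ω → S} (hX : Measurable X) (hY : Measurable Y)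
    {q : S → U} (hq : Measurable q)
    (f g : S → ℝ) (hf : Measurable f) (hg : Measurable g)
    (hfb : ∃ C, ∀ s, |f s| ≤ C) (hgb : ∃ C, ∀ s, |g s| ≤ C)
    (fh gh : U → ℝ) (hfh : Measurable fh) (hgh : Measurable gh)
    (hfhb : ∃ C, ∀ u, |fh u| ≤ C) (hghb : ∃ C, ∀ u, |gh u| ≤ C)
    (hcondf : P[(fun ω => f (X ω)) | MeasurableSpace.comap Y inferInstance]
        =ᵐ[P] P[(fun ω => fh (q (X ω))) | MeasurableSpace.comap Y inferInstance])
    (hcondg : P[(fun ω => g (Y ω)) | MeasurableSpace.comap X inferInstance]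
        =ᵐ[P] P[(fun ω => gh (q (Y ω))) | MeasurableSpace.comap X inferInstance])
    (hEf : ∫ ω, f (X ω) ∂P = ∫ ω, fh (q (X ω)) ∂P)
    (hEg : ∫ ω, g (Y ω) ∂P = ∫ ω, gh (q (Y ω)) ∂P) :
    ∫ ω, f (X ω) * g (Y ω) ∂P = ∫ ω, fh (q (X ω)) * gh (q (Y ω)) ∂P := by
  obtain ⟨Cf, hCf⟩ := hfb
  obtain ⟨Cg, hCg⟩ := hgb
  obtain ⟨Cfh, hCfh⟩ := hfhb
  obtain ⟨Cgh, hCgh⟩ := hghb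
  have hmYle : MeasurableSpace.comap Y inferInstance ≤ ‹MeasurableSpace Ω› := hY.comap_le
  have hmXle : MeasurableSpace.comap X inferInstance ≤ ‹MeasurableSpace Ω› := hX.comap_le
  have hYm : Measurable[MeasurableSpace.comap Y inferInstance] Y :=
    Measurable.of_comap_le le_rfl
  have hXm : Measurable[MeasurableSpace.comap X inferInstance] X :=
    Measurable.of_comap_le le_rfl
  have hgY : StronglyMeasurable[MeasurableSpace.comap Y inferInstance] (fun ω => g (Y ω)) :=
    (hg.comp hYm).stronglyMeasurable
  have hfhX : StronglyMeasurable[MeasurableSpace.comap X inferInstance]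
      (fun ω => fh (q (X ω))) := ((hfh.comp hq).comp hXm).stronglyMeasurable
  have ifX : Integrable (fun ω => f (X ω)) P := aux_integrable (hf.comp hX) (fun ω => hCf _)
  have ifhX : Integrable (fun ω => fh (q (X ω))) P :=
    aux_integrable ((hfh.comp hq).comp hX) (fun ω => hCfh _)
  have igY : Integrable (fun ω => g (Y ω)) P := aux_integrable (hg.comp hY) (fun ω => hCg _)
  have ighY : Integrable (fun ω => gh (q (Y ω))) P :=
    aux_integrable ((hgh.comp hq).comp hY) (fun ω => hCgh _)
  have ibd : ∀ {a b : Ω → ℝ} {Ca Cb : ℝ}, Measurable a → Measurable b →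
      (∀ ω, |a ω| ≤ Ca) → (∀ ω, |b ω| ≤ Cb) → Integrable (fun ω => a ω * b ω) P := by
    intro a b Ca Cb ha hb hCa hCb
    refine aux_integrable (ha.mul hb) (C := Ca * Cb) (fun ω => ?_)
    rw [abs_mul]
    exact mul_le_mul (hCa ω) (hCb ω) (abs_nonneg _) ((abs_nonneg _).trans (hCa ω))
  calc ∫ ω, f (X ω) * g (Y ω) ∂P
      = ∫ ω, g (Y ω) * f (X ω) ∂P := by simp_rw [mul_comm]
    _ = ∫ ω, g (Y ω) * (P[(fun ω => f (X ω))|MeasurableSpace.comap Y inferInstance]) ω ∂P :=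
        aux_key hmYle hgY ifX (ibd (hg.comp hY) (hf.comp hX) (fun _ => hCg _) (fun _ => hCf _))
    _ = ∫ ω, g (Y ω) * (P[(fun ω => fh (q (X ω)))|MeasurableSpace.comap Y inferInstance]) ω ∂P :=
        integral_congr_ae (hcondf.mono fun ω h => by dsimp only; rw [h])
    _ = ∫ ω, g (Y ω) * fh (q (X ω)) ∂P :=
        (aux_key hmYle hgY ifhX (ibd (hg.comp hY) ((hfh.comp hq).comp hX)
          (fun _ => hCg _) (fun _ => hCfh _))).symm
    _ = ∫ ω, fh (q (X ω)) * g (Y ω) ∂P := by simp_rw [mul_comm]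
    _ = ∫ ω, fh (q (X ω)) * (P[(fun ω => g (Y ω))|MeasurableSpace.comap X inferInstance]) ω ∂P :=
        aux_key hmXle hfhX igY (ibd ((hfh.comp hq).comp hX) (hg.comp hY)
          (fun _ => hCfh _) (fun _ => hCg _))
    _ = ∫ ω, fh (q (X ω)) * (P[(fun ω => gh (q (Y ω)))|MeasurableSpace.comap X inferInstance]) ω ∂P :=
        integral_congr_ae (hcondg.mono fun ω h => by dsimp only; rw [h])
    _ = ∫ ω, fh (q (X ω)) * gh (q (Y ω)) ∂P :=
        (aux_key hmXle hfhX ighY (ibd ((hfh.comp hq).comp hX) ((hgh.comp hq).comp hY)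
          (fun _ => hCfh _) (fun _ => hCgh _))).symm
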